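/- Let α ∈ (2/3, 1) and for integers i ≥ 1 define p_i = (2/4^i)·((2i−2)!/((i−1)!·(i+1)!))·(2/α − 2)^i·((3α−2)i + 1). Then the series Σ_{i≥1} i·p_i converges and α − Σ_{i≥1} i·p_i = √α·√(3α−2); in particular α − Σ_{i≥1} i·p_i > 0. -/

import Mathlib

/-!
Put `x = (1 - α) / (2α) ∈ (0, 1/4)`, so that `2/α - 2 = 4x` and `3α - 2 = α(1 - 4x)`.
In terms of the Catalan numbers `Cₙ`, one gets `(n + 1) p_{n+1} = 2αx (Cₙ xⁿ + bₙ - b_{n+1})`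
with `bₙ = n Cₙ xⁿ`. The `b`-part telescopes to `b₀ = 0`, and the Catalan generating function
satisfies `2x C(x) = 1 - √(1 - 4x)`, so the series sums to `α (1 - √(1 - 4x)) = α - √α √(3α - 2)`.
-/

open Nat

theorem catalan_le_four_pow (n : ℕ) : catalan n ≤ 4 ^ n :=
  calc catalan n ≤ (n + 1) * catalan n := Nat.le_mul_of_pos_left _ n.succ_pos
    _ = n.centralBinom := succ_mul_catalan_eq_centralBinom n
    _ ≤ 4 ^ n := centralBinom_le_four_pow n

theorem succ_succ_mul_catalan_succ (n : ℕ) :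
    (n + 2) * catalan (n + 1) = 2 * (2 * n + 1) * catalan n := by
  refine Nat.eq_of_mul_eq_mul_left n.succ_pos ?_
  calc (n + 1) * ((n + 2) * catalan (n + 1)) = (n + 1) * centralBinom (n + 1) := by
        rw [← succ_mul_catalan_eq_centralBinom (n + 1)]
    _ = (n + 1) * (2 * (2 * n + 1) * catalan n) := by
        rw [succ_mul_centralBinom_succ, ← succ_mul_catalan_eq_centralBinom]; ring

theorem factorial_two_mul_eq (n : ℕ) : (2 * n)! = (n + 1) * catalan n * n ! * n ! := by
  rw [succ_mul_catalan_eq_centralBinom, centralBinom_eq_two_mul_choose,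
    ← choose_mul_factorial_mul_factorial (show n ≤ 2 * n by omega),
    show 2 * n - n = n by omega]

theorem factorial_two_mul_div_factorial_mul_factorial_add_two (n : ℕ) :
    ((2 * n)! : ℝ) / (n ! * (n + 2)!) = catalan n / (n + 2) := by
  rw [factorial_two_mul_eq, factorial_succ, factorial_succ]
  push_cast
  field_simp
  ring

theorem Summable.hasSum_sub_succ {G : Type*} [AddCommGroup G] [TopologicalSpace G]
    [IsTopologicalAddGroup G] [T2Space G] {f : ℕ → G} (hf : Summable f) :
    HasSum (fun n ↦ f n - f (n + 1)) (f 0) := by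
  have h := hf.hasSum.sub ((summable_nat_add_iff 1).mpr hf).hasSum
  rwa [hf.tsum_eq_zero_add, add_sub_cancel_right] at h

theorem summable_catalan_mul_pow {t : ℝ} (ht : |t| < 1 / 4) :
    Summable fun n ↦ (catalan n : ℝ) * t ^ n := by
  refine Summable.of_norm_bounded (g := fun n ↦ (4 * |t|) ^ n)
    (summable_geometric_of_lt_one (by positivity) (by linarith)) fun n ↦ ?_
  rw [norm_mul, norm_pow, Real.norm_eq_abs, Real.norm_eq_abs, Nat.abs_cast, mul_pow]
  gcongr
  exact_mod_cast catalan_le_four_pow n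

theorem summable_natCast_mul_catalan_mul_pow {t : ℝ} (ht : |t| < 1 / 4) :
    Summable fun n : ℕ ↦ (n : ℝ) * catalan n * t ^ n := by
  refine Summable.of_norm_bounded (g := fun n : ℕ ↦ (n : ℝ) ^ 1 * (4 * |t|) ^ n)
    (summable_pow_mul_geometric_of_norm_lt_one 1
      (by rw [Real.norm_of_nonneg (by positivity)]; linarith)) fun n ↦ ?_
  rw [norm_mul, norm_mul, norm_pow, Real.norm_eq_abs, Real.norm_eq_abs, Real.norm_eq_abs,
    Nat.abs_cast, Nat.abs_cast, mul_pow, pow_one, mul_assoc]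
  gcongr
  exact_mod_cast catalan_le_four_pow n

noncomputable def catalanGF (t : ℝ) : ℝ := ∑' n, (catalan n : ℝ) * t ^ n

theorem catalanGF_eq_one_add_mul_sq {t : ℝ} (ht : |t| < 1 / 4) :
    catalanGF t = 1 + t * catalanGF t ^ 2 := by
  have hs := summable_catalan_mul_pow ht
  have hsq : catalanGF t ^ 2 = ∑' n, (catalan (n + 1) : ℝ) * t ^ n := by
    rw [sq, catalanGF, tsum_mul_tsum_eq_tsum_sum_antidiagonal_of_summable_norm hs.norm hs.norm]
    refine tsum_congr fun n ↦ ?_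
    rw [catalan_succ', Nat.cast_sum, Finset.sum_mul]
    refine Finset.sum_congr rfl fun kl hkl ↦ ?_
    rw [← Finset.HasAntidiagonal.mem_antidiagonal.mp hkl, pow_add]
    push_cast
    ring
  rw [hsq, ← tsum_mul_left, catalanGF, hs.tsum_eq_zero_add]
  simp only [catalan_zero, Nat.cast_one, pow_zero, mul_one, pow_succ]
  congr 1
  exact tsum_congr fun n ↦ by ring

theorem catalanGF_monotoneOn : MonotoneOn catalanGF (Set.Ico 0 (1 / 4)) := by
  intro s ⟨hs0, hs4⟩ t ⟨ht0, ht4⟩ hst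
  refine Summable.tsum_le_tsum (fun n ↦ ?_) (summable_catalan_mul_pow ?_)
    (summable_catalan_mul_pow ?_)
  · gcongr
  · rwa [abs_of_nonneg hs0]
  · rwa [abs_of_nonneg ht0]

theorem one_le_catalanGF {t : ℝ} (ht0 : 0 ≤ t) (ht4 : t < 1 / 4) : 1 ≤ catalanGF t := by
  simpa [catalanGF] using (summable_catalan_mul_pow (by rwa [abs_of_nonneg ht0])).le_tsum 0
    fun n _ ↦ by positivity

theorem two_mul_mul_catalanGF {t : ℝ} (ht0 : 0 ≤ t) (ht4 : t < 1 / 4) :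
    2 * t * catalanGF t = 1 - √(1 - 4 * t) := by
  have hsq (s : ℝ) (hs0 : 0 ≤ s) (hs4 : s < 1 / 4) :
      (2 * s * catalanGF s - 1) ^ 2 = 1 - 4 * s := by
    have hs : |s| < 1 / 4 := by rwa [abs_of_nonneg hs0]
    linear_combination (-4 * s) * catalanGF_eq_one_add_mul_sq hs
  -- If `2tG(t) > 1`, then `2sG(s) - 1` is larger still for `s > t`,
  -- yet its square `1 - 4s` is smaller.
  have hle : 2 * t * catalanGF t ≤ 1 := by
    by_contra! h
    obtain ⟨s, hts, hs4⟩ := exists_between ht4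
    have hGt := one_le_catalanGF ht0 ht4
    have hGs : catalanGF t ≤ catalanGF s :=
      catalanGF_monotoneOn ⟨ht0, ht4⟩ ⟨by linarith, hs4⟩ hts.le
    have hmono : 2 * t * catalanGF t < 2 * s * catalanGF s := by nlinarith
    nlinarith [hsq t ht0 ht4, hsq s (by linarith) hs4]
  rw [← hsq t ht0 ht4, Real.sqrt_sq_eq_abs, abs_of_nonpos (by linarith)]
  ring

noncomputable def peelingStepProb (α : ℝ) (i : ℕ) : ℝ :=
  2 / 4 ^ i * (((2 * i - 2)! : ℝ) / ((i - 1)! * (i + 1)!)) * (2 / α - 2) ^ i *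
    ((3 * α - 2) * i + 1)

theorem succ_mul_peelingStepProb_succ {α x : ℝ} (hα : α ≠ 0) (hx : 2 * α * x = 1 - α)
    (n : ℕ) :
    ((n : ℝ) + 1) * peelingStepProb α (n + 1) =
      2 * α * x * (catalan n * x ^ n +
        (n * catalan n * x ^ n - (n + 1) * catalan (n + 1) * x ^ (n + 1))) := by
  have h4x : 2 / α - 2 = 4 * x := by field_simp; linarith
  have hlin : (3 * α - 2) * (n + 1) + 1 = α * (n + 2 - 2 * x * (2 * n + 1)) := by
    linear_combination (2 * (n : ℝ) + 1) * hx
  have hrec : (catalan (n + 1) : ℝ) = 2 * (2 * n + 1) * catalan n / (n + 2) := by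
    rw [eq_div_iff (by positivity), mul_comm]
    exact_mod_cast succ_succ_mul_catalan_succ n
  rw [peelingStepProb, show 2 * (n + 1) - 2 = 2 * n by omega, Nat.add_sub_cancel, Nat.cast_succ,
    factorial_two_mul_div_factorial_mul_factorial_add_two, h4x, hlin, hrec, mul_pow]
  field_simp
  ring

theorem supercritical_expected_boundary_change
    (α : ℝ) (hα0 : 2 / 3 < α) (hα1 : α < 1)
    (p : ℕ → ℝ)
    (hp : ∀ i : ℕ, 1 ≤ i →
      p i = 2 / 4 ^ i *
        ((Nat.factorial (2 * i - 2) : ℝ) /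
          ((Nat.factorial (i - 1) : ℝ) * (Nat.factorial (i + 1) : ℝ))) *
        (2 / α - 2) ^ i * ((3 * α - 2) * (i : ℝ) + 1)) :
    HasSum (fun i : ℕ => ((i : ℝ) + 1) * p (i + 1))
        (α - Real.sqrt α * Real.sqrt (3 * α - 2)) ∧
      0 < α - ∑' i : ℕ, ((i : ℝ) + 1) * p (i + 1) := by
  have hα : 0 < α := by linarith
  obtain ⟨x, hx⟩ : ∃ x, 2 * α * x = 1 - α := ⟨(1 - α) / (2 * α), by field_simp⟩
  have hx0 : 0 ≤ x := by nlinarith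
  have hx4 : x < 1 / 4 := by nlinarith
  have hxabs : |x| < 1 / 4 := by rwa [abs_of_nonneg hx0]
  have hterm (n : ℕ) : ((n : ℝ) + 1) * p (n + 1) = 2 * α * x * (catalan n * x ^ n +
      (n * catalan n * x ^ n - (n + 1) * catalan (n + 1) * x ^ (n + 1))) := by
    rw [hp (n + 1) n.succ_pos]
    exact succ_mul_peelingStepProb_succ hα.ne' hx n
  have hvalue : α * √(1 - 4 * x) = √α * √(3 * α - 2) := by
    calc α * √(1 - 4 * x) = √(α ^ 2 * (1 - 4 * x)) := by
          rw [Real.sqrt_mul (sq_nonneg α), Real.sqrt_sq hα.le]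
      _ = √(α * (3 * α - 2)) := by congr 1; linear_combination (-2 * α) * hx
      _ = √α * √(3 * α - 2) := Real.sqrt_mul hα.le _
  have hsum : HasSum (fun i : ℕ => ((i : ℝ) + 1) * p (i + 1))
      (α - √α * √(3 * α - 2)) := by
    have h := ((summable_catalan_mul_pow hxabs).hasSum.add
      (summable_natCast_mul_catalan_mul_pow hxabs).hasSum_sub_succ).mul_left (2 * α * x)
    simp only [Nat.cast_zero, Nat.cast_succ, zero_mul, ← hterm] at h
    have hG : 2 * α * x * (catalanGF x + 0) = α - √α * √(3 * α - 2) := by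
      rw [add_zero, ← hvalue]
      linear_combination α * two_mul_mul_catalanGF hx0 hx4
    rwa [← catalanGF, hG] at h
  refine ⟨hsum, ?_⟩
  rw [hsum.tsum_eq, ← hvalue, sub_sub_cancel]
  exact mul_pos hα (Real.sqrt_pos.mpr (by linarith))
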